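/- arXiv:2501.05045 — 5 statements merged into one kernel-verified Lean document; each statement's English description precedes it below -/
import Mathlib

section
/- Let f_n(x) be the characteristic polynomial of the n×n matrix B_n which is the adjacency matrix of the path graph with an added loop at each of the first n−1 vertices (i.e., diagonal entries 1 except the last which is 0, and 1s on the sub- and superdiagonal). Then the roots of f_n are exactly 1 + 2·cos(2kπ/(2n+1)) for k = 1, ..., n, and the spectral radius of B_n is 1 + 2·cos(2π/(2n+1)). -/
/-!
For `θ = 2kπ/(2n+1)` the vector `v_j = sin (jθ)`, `j = 1, …, n`, is an eigenvector of `B_n`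
with eigenvalue `1 + 2 cos θ`: the identity `sin ((j-1)θ) + sin (jθ) + sin ((j+1)θ) =
(1 + 2 cos θ) sin (jθ)` gives every row, the first one because `sin 0 = 0`, and the last one
(whose diagonal entry is `0`) because `sin (nθ) + sin ((n+1)θ) = 2 sin (kπ) cos (θ/2) = 0`.
As `cos` is injective on `[0, π]`, these are `n` distinct roots of the degree `n`
characteristic polynomial, hence all of them, and also the whole complex spectrum.
The largest in absolute value is the one for `k = 1`.
-/

/-- The spectral radius of a square complex matrix. -/
noncomputable def specRad {m : Type*} [Fintype m] [DecidableEq m]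
    (M : Matrix m m ℂ) : ℝ :=
  sSup {r : ℝ | ∃ μ ∈ spectrum ℂ M, r = ‖μ‖}

/-- `B n` is the `n × n` adjacency matrix of the path graph with a loop added at each of
the first `n - 1` vertices: diagonal entries `1` except the last (which is `0`), and
`1` on the sub- and superdiagonal. -/
def BMat (n : ℕ) : Matrix (Fin n) (Fin n) ℝ :=
  Matrix.of fun i j =>
    if i = j ∧ (i : ℕ) + 1 < n then 1
    else if (i : ℕ) + 1 = (j : ℕ) ∨ (j : ℕ) + 1 = (i : ℕ) then 1 else 0

open Finset Matrix Polynomial Real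

theorem Polynomial.roots_eq_val_of_natDegree_le_card {R : Type*} [CommRing R] [IsDomain R]
    {p : R[X]} (hp : p ≠ 0) {s : Finset R} (hs : ∀ x ∈ s, p.IsRoot x)
    (hcard : p.natDegree ≤ #s) : p.roots = s.val :=
  (Multiset.eq_of_le_of_card_le
    ((Multiset.le_iff_subset s.nodup).2 fun x hx => (mem_roots hp).2 (hs x hx))
    (hcard.trans' (card_roots' p))).symm

theorem Matrix.isRoot_charpoly_of_mulVec_eq_smul {m R : Type*} [Fintype m] [DecidableEq m]
    [CommRing R] [IsDomain R] {A : Matrix m m R} {μ : R} {v : m → R} (hv : v ≠ 0)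
    (h : A *ᵥ v = μ • v) : A.charpoly.IsRoot μ := by
  rw [← charpoly_toLin', ← Module.End.hasEigenvalue_iff_isRoot_charpoly]
  exact Module.End.hasEigenvalue_of_hasEigenvector
    ⟨Module.End.mem_eigenspace_iff.2 (by simpa using h), hv⟩

theorem Matrix.mem_spectrum_map_iff_of_card_roots {m K L : Type*} [Fintype m] [DecidableEq m]
    [Field K] [Field L] (f : K →+* L) {A : Matrix m m K}
    (hA : Multiset.card A.charpoly.roots = Fintype.card m) {μ : L} :
    μ ∈ spectrum L (A.map f) ↔ ∃ x ∈ A.charpoly.roots, f x = μ := by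
  rw [mem_spectrum_iff_isRoot_charpoly, charpoly_map,
    ← mem_roots (map_monic_ne_zero A.charpoly_monic),
    ← A.charpoly_monic.roots_map_of_card_eq_natDegree f (by rwa [charpoly_natDegree_eq_dim]),
    Multiset.mem_map]

theorem Finset.sum_range_ite_succ_eq {M : Type*} [AddCommMonoid M] {n i : ℕ} (hi : i < n)
    (c : M) : ∑ m ∈ range n, (if m + 1 = i then c else 0) = if 0 < i then c else 0 := by
  rcases i with _ | i
  · simp
  · simp [hi.trans' (Nat.lt_succ_self i)]

namespace BMat

variable {n : ℕ}

-- `s` pads the vector with `s 0` and `s (n + 1)`; the hypotheses are the boundary conditions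
-- that make the first and the last row follow the pattern of the interior rows.
theorem mulVec_apply (s : ℕ → ℝ) (h0 : s 0 = 0) (hn : s n + s (n + 1) = 0) (i : Fin n) :
    (BMat n *ᵥ fun j => s (j + 1)) i = s i + s (i + 1) + s (i + 2) := by
  obtain ⟨i, hi⟩ := i
  have hterm : ∀ m : ℕ, (if i = m ∧ i + 1 < n then (1 : ℝ)
      else if i + 1 = m ∨ m + 1 = i then 1 else 0) * s (m + 1) =
      (if m = i then (if i + 1 < n then s (i + 1) else 0) else 0) +
      (if m = i + 1 then s (i + 2) else 0) + (if m + 1 = i then s i else 0) := by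
    intro m
    split_ifs <;> first | ring1 | (subst_vars; ring1) | omega
  simp only [mulVec, dotProduct, BMat, of_apply, Fin.ext_iff]
  rw [Fin.sum_univ_eq_sum_range (fun m => (if i = m ∧ i + 1 < n then (1 : ℝ)
      else if i + 1 = m ∨ m + 1 = i then 1 else 0) * s (m + 1)),
    sum_congr rfl fun m _ => hterm m, sum_add_distrib, sum_add_distrib, sum_ite_eq', sum_ite_eq',
    sum_range_ite_succ_eq hi]
  have hprev : (if 0 < i then s i else 0) = s i := by
    rcases i with _ | i <;> simp [h0]
  simp only [mem_range, if_pos hi, hprev]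
  rcases Nat.lt_or_ge (i + 1) n with hlt | hge
  · simp only [if_pos hlt]
    ring
  · obtain rfl : n = i + 1 := by omega
    simp only [lt_irrefl, if_false]
    linear_combination -hn

theorem mulVec_sin {θ : ℝ} (hθ : sin (n * θ) + sin ((n + 1) * θ) = 0) :
    (BMat n *ᵥ fun j : Fin n => sin ((j + 1 : ℕ) * θ)) =
      (1 + 2 * cos θ) • fun j : Fin n => sin ((j + 1 : ℕ) * θ) := by
  ext i
  rw [mulVec_apply (fun m => sin (m * θ)) (by simp) (by exact_mod_cast hθ)]
  simp only [Pi.smul_apply, smul_eq_mul]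
  push_cast
  rw [show ((i : ℝ) + 2) * θ = (i + 1) * θ + θ by ring,
    show (i : ℝ) * θ = (i + 1) * θ - θ by ring, sin_add, sin_sub]
  ring

noncomputable def angle (n k : ℕ) : ℝ := 2 * k * π / (2 * n + 1)

noncomputable def eigenvalue (n k : ℕ) : ℝ := 1 + 2 * cos (angle n k)

theorem eigenvalue_one : eigenvalue n 1 = 1 + 2 * cos (2 * π / (2 * n + 1)) := by
  simp [eigenvalue, angle]

theorem angle_pos {k : ℕ} (hk : 1 ≤ k) : 0 < angle n k := by
  unfold angle
  have : (1 : ℝ) ≤ k := by exact_mod_cast hk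
  positivity

theorem angle_lt_pi {k : ℕ} (hkn : k ≤ n) : angle n k < π := by
  rw [angle, div_lt_iff₀ (by positivity)]
  have : (k : ℝ) ≤ n := by exact_mod_cast hkn
  nlinarith [pi_pos]

theorem angle_mem_Icc {k : ℕ} (hk : k ∈ Icc 1 n) : angle n k ∈ Set.Icc 0 π :=
  ⟨(angle_pos (mem_Icc.1 hk).1).le, (angle_lt_pi (mem_Icc.1 hk).2).le⟩

theorem sin_add_sin_angle (k : ℕ) :
    sin (n * angle n k) + sin ((n + 1) * angle n k) = 0 := by
  rw [sin_add_sin, show (n * angle n k + (n + 1) * angle n k) / 2 = k * π by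
    unfold angle; field_simp; ring, sin_nat_mul_pi, mul_zero, zero_mul]

theorem isRoot_charpoly_eigenvalue {k : ℕ} (hk : k ∈ Icc 1 n) :
    (BMat n).charpoly.IsRoot (eigenvalue n k) := by
  obtain ⟨hk1, hkn⟩ := mem_Icc.1 hk
  refine isRoot_charpoly_of_mulVec_eq_smul (fun hv => ?_) (mulVec_sin (sin_add_sin_angle k))
  have := congr_fun hv ⟨0, by omega⟩
  simp only [zero_add, Nat.cast_one, one_mul, Pi.zero_apply] at this
  exact (sin_pos_of_pos_of_lt_pi (angle_pos hk1) (angle_lt_pi hkn)).ne' this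

theorem eigenvalue_injOn : Set.InjOn (eigenvalue n) (Icc 1 n) := by
  intro k hk l hl h
  have := injOn_cos (angle_mem_Icc hk) (angle_mem_Icc hl) (by unfold eigenvalue at h; linarith)
  unfold angle at this
  field_simp at this
  exact_mod_cast this

theorem roots_charpoly : (BMat n).charpoly.roots = ((Icc 1 n).image (eigenvalue n)).val := by
  refine roots_eq_val_of_natDegree_le_card (charpoly_monic _).ne_zero ?_ ?_
  · intro x hx
    obtain ⟨k, hk, rfl⟩ := mem_image.1 hx
    exact isRoot_charpoly_eigenvalue hk
  · rw [charpoly_natDegree_eq_dim, card_image_of_injOn eigenvalue_injOn]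
    simp

theorem mem_spectrum_map_ofReal {μ : ℂ} :
    μ ∈ spectrum ℂ ((BMat n).map (Complex.ofReal : ℝ → ℂ)) ↔
      ∃ k ∈ Icc 1 n, (eigenvalue n k : ℂ) = μ := by
  have hcard : Multiset.card (BMat n).charpoly.roots = Fintype.card (Fin n) := by
    rw [roots_charpoly, Finset.card_val, card_image_of_injOn eigenvalue_injOn]
    simp
  rw [show (BMat n).map (Complex.ofReal : ℝ → ℂ) = (BMat n).map Complex.ofRealHom from rfl,
    mem_spectrum_map_iff_of_card_roots _ hcard, roots_charpoly]
  simp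

theorem eigenvalue_le_eigenvalue_one {k : ℕ} (hk : k ∈ Icc 1 n) :
    eigenvalue n k ≤ eigenvalue n 1 := by
  have hle : angle n 1 ≤ angle n k := by
    unfold angle
    gcongr
    exact_mod_cast (mem_Icc.1 hk).1
  have := cos_le_cos_of_nonneg_of_le_pi (angle_pos le_rfl).le (angle_mem_Icc hk).2 hle
  unfold eigenvalue
  linarith

theorem eigenvalue_one_nonneg (hn : 1 ≤ n) : 0 ≤ eigenvalue n 1 := by
  have hle : angle n 1 ≤ π - π / 3 := by
    rw [angle, div_le_iff₀ (by positivity)]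
    have : (1 : ℝ) ≤ n := by exact_mod_cast hn
    nlinarith [pi_pos]
  have := cos_le_cos_of_nonneg_of_le_pi (angle_pos le_rfl).le (by linarith [pi_pos]) hle
  rw [cos_pi_sub, cos_pi_div_three] at this
  unfold eigenvalue
  linarith

theorem one_le_eigenvalue_one (hn : 2 ≤ n) : 1 ≤ eigenvalue n 1 := by
  have hle : angle n 1 ≤ π / 2 := by
    rw [angle, div_le_iff₀ (by positivity)]
    have : (2 : ℝ) ≤ n := by exact_mod_cast hn
    nlinarith [pi_pos]
  have := cos_nonneg_of_mem_Icc ⟨by linarith [angle_pos (n := n) le_rfl], hle⟩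
  unfold eigenvalue
  linarith

theorem abs_eigenvalue_le {k : ℕ} (hk : k ∈ Icc 1 n) : |eigenvalue n k| ≤ eigenvalue n 1 := by
  obtain ⟨hk1, hkn⟩ := mem_Icc.1 hk
  refine abs_le.2 ⟨?_, eigenvalue_le_eigenvalue_one hk⟩
  rcases Nat.lt_or_ge n 2 with hn | hn
  · obtain rfl : k = 1 := by omega
    linarith [eigenvalue_one_nonneg (n := n) (by omega)]
  · have h1 := one_le_eigenvalue_one hn
    unfold eigenvalue at h1 ⊢
    linarith [neg_one_le_cos (angle n k)]

end BMat

open BMat in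
/-- The roots of the characteristic polynomial of `B n` are exactly
`1 + 2 cos (2kπ/(2n+1))` for `k = 1, …, n`, and the spectral radius of `B n` is
`1 + 2 cos (2π/(2n+1))`. -/
theorem stmt_7 {n : ℕ} (hn : 1 ≤ n) :
    ({x : ℝ | (BMat n).charpoly.IsRoot x} =
      {x : ℝ | ∃ k : ℕ, 1 ≤ k ∧ k ≤ n ∧
        x = 1 + 2 * Real.cos (2 * k * Real.pi / (2 * n + 1))}) ∧
    specRad ((BMat n).map (Complex.ofReal : ℝ → ℂ)) =
      1 + 2 * Real.cos (2 * Real.pi / (2 * n + 1)) := by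
  refine ⟨Set.ext fun x => ?_, ?_⟩
  · rw [Set.mem_ofPred_eq, ← mem_roots (charpoly_monic _).ne_zero, roots_charpoly]
    simp [eigenvalue, angle, eq_comm, and_assoc]
  · rw [specRad, ← eigenvalue_one]
    have h1 : 1 ∈ Icc 1 n := mem_Icc.2 ⟨le_rfl, hn⟩
    refine IsGreatest.csSup_eq ⟨⟨_, mem_spectrum_map_ofReal.2 ⟨1, h1, rfl⟩, ?_⟩, ?_⟩
    · rw [Complex.norm_real, norm_of_nonneg (eigenvalue_one_nonneg hn)]
    · rintro r ⟨μ, hμ, rfl⟩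
      obtain ⟨k, hk, rfl⟩ := mem_spectrum_map_ofReal.1 hμ
      rw [Complex.norm_real, norm_eq_abs]
      exact abs_eigenvalue_le hk
end

section
/- The spectral radius of the 4×4 matrix [[1,1,0,0],[1,1,1,0],[0,1,0,1],[0,0,1,0]] equals (1+√13)/2. -/
/-!
The determinant of `μ - A` factors as `μ (μ - 1) (μ² - μ - 3)`, so the eigenvalues are
`0`, `1` and the two roots `φ = (1 + √13)/2`, `1 - φ` of `x² - x - 3`. Since `φ > 1` and
`|1 - φ| = φ - 1`, the largest modulus is `φ`, attained by an eigenvalue.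
-/

theorem specRad_eq_norm_of_forall_norm_le {m : Type*} [Fintype m] [DecidableEq m]
    {M : Matrix m m ℂ} {μ₀ : ℂ} (h₀ : μ₀ ∈ spectrum ℂ M)
    (hle : ∀ μ ∈ spectrum ℂ M, ‖μ‖ ≤ ‖μ₀‖) : specRad M = ‖μ₀‖ :=
  IsGreatest.csSup_eq ⟨⟨μ₀, h₀, rfl⟩, by rintro _ ⟨μ, hμ, rfl⟩; exact hle μ hμ⟩

namespace GabrielF4

def A : Matrix (Fin 4) (Fin 4) ℂ := !![1, 1, 0, 0; 1, 1, 1, 0; 0, 1, 0, 1; 0, 0, 1, 0]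

theorem det_charmatrix (μ : ℂ) :
    (algebraMap ℂ (Matrix (Fin 4) (Fin 4) ℂ) μ - A).det = μ * (μ - 1) * (μ ^ 2 - μ - 3) := by
  have hsub : algebraMap ℂ (Matrix (Fin 4) (Fin 4) ℂ) μ - A =
      !![μ - 1, -1, 0, 0; -1, μ - 1, -1, 0; 0, -1, μ, -1; 0, 0, -1, μ] := by
    ext i j
    fin_cases i <;> fin_cases j <;>
      simp [A, Matrix.algebraMap_matrix_apply]
  rw [hsub]
  simp [Matrix.det_succ_row_zero, Fin.sum_univ_succ, Fin.succAbove]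
  ring

theorem mem_spectrum_iff (μ : ℂ) :
    μ ∈ spectrum ℂ A ↔ μ * (μ - 1) * (μ ^ 2 - μ - 3) = 0 := by
  rw [spectrum.mem_iff, Matrix.isUnit_iff_isUnit_det, isUnit_iff_ne_zero, not_not,
    det_charmatrix]

noncomputable def φ : ℝ := (1 + √13) / 2

theorem one_le_φ : 1 ≤ φ := by
  have : (1 : ℝ) ≤ √13 := Real.one_le_sqrt.2 (by norm_num)
  unfold φ; linarith

theorem φ_sq_sub_φ : φ ^ 2 - φ = 3 := by
  have : √13 ^ 2 = 13 := Real.sq_sqrt (by norm_num)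
  unfold φ; linear_combination this / 4

theorem sq_sub_self_sub_three_eq_zero_iff (μ : ℂ) :
    μ ^ 2 - μ - 3 = 0 ↔ μ = φ ∨ μ = 1 - φ := by
  have hφ : (φ : ℂ) ^ 2 - φ = 3 := by exact_mod_cast φ_sq_sub_φ
  have hfactor : μ ^ 2 - μ - 3 = (μ - φ) * (μ - (1 - φ)) := by linear_combination hφ
  rw [hfactor, mul_eq_zero, sub_eq_zero, sub_eq_zero]

theorem norm_le_φ_of_mem_spectrum {μ : ℂ} (hμ : μ ∈ spectrum ℂ A) : ‖μ‖ ≤ φ := by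
  have hφ := one_le_φ
  rw [mem_spectrum_iff, mul_eq_zero, mul_eq_zero, sub_eq_zero,
    sq_sub_self_sub_three_eq_zero_iff] at hμ
  rcases hμ with (rfl | rfl) | rfl | rfl
  · simp only [norm_zero]; linarith
  · simp only [norm_one]; exact hφ
  · rw [Complex.norm_real, Real.norm_of_nonneg (by linarith)]
  · rw [← Complex.ofReal_one, ← Complex.ofReal_sub, Complex.norm_real,
      Real.norm_of_nonpos (by linarith)]
    linarith

theorem φ_mem_spectrum : (φ : ℂ) ∈ spectrum ℂ A := by
  rw [mem_spectrum_iff, mul_eq_zero, sq_sub_self_sub_three_eq_zero_iff]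
  exact Or.inr (Or.inl rfl)

theorem norm_φ : ‖(φ : ℂ)‖ = φ := by
  rw [Complex.norm_real, Real.norm_of_nonneg (by linarith [one_le_φ])]

end GabrielF4

open GabrielF4 in
/-- The spectral radius of the `4 × 4` matrix
`[[1,1,0,0],[1,1,1,0],[0,1,0,1],[0,0,1,0]]` equals `(1 + √13)/2`. -/
theorem stmt_9 :
    specRad (!![1, 1, 0, 0; 1, 1, 1, 0; 0, 1, 0, 1; 0, 0, 1, 0] :
        Matrix (Fin 4) (Fin 4) ℂ) = (1 + Real.sqrt 13) / 2 := by
  have h := specRad_eq_norm_of_forall_norm_le φ_mem_spectrum fun μ hμ => by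
    rw [norm_φ]
    exact norm_le_φ_of_mem_spectrum hμ
  rw [norm_φ] at h
  exact h
end

section
/- The quadratic form q(x) = 4∑_{j∈Δ_0^-} x_j² − ∑_{i∈Δ_0^+} (∑_{j∈Δ_0^-} a_{ij} x_j)² associated to a bipartite orientation of the Dynkin diagram A_n (with sinks and sources alternating) is positive definite. -/
/-!
Extend `x` by zero to `y : ℤ → ℝ` along the positions of the sinks. The term of a source `i`
is then `(y (i - 1) + y (i + 1))²`, and `(a + b)² = 2a² + 2b² - (a - b)²` bounds the sum of
these terms by `2 ∑ y² + 2 ∑ y²` minus the sum of the `(y (t - 1) - y (t + 1))²`, since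
shifting does not change `∑ y²`. Enlarging the set of sources by `m + 1`, where `m` is the
largest index with `y m ≠ 0`, makes the subtracted sum at least `y m² > 0`.
-/

open Finset Function

theorem sum_le_sum_of_support_subset {ι M : Type*} [AddCommMonoid M] [PartialOrder M]
    [IsOrderedAddMonoid M] {f : ι → M} {s : Finset ι} (hf : 0 ≤ f) (hs : support f ⊆ s)
    (V : Finset ι) : ∑ t ∈ V, f t ≤ ∑ t ∈ s, f t := by
  classical
  rw [← sum_filter_of_ne fun t _ ht => hs ht]
  exact sum_le_sum_of_subset_of_nonneg (fun t ht => (mem_filter.1 ht).2) fun t _ _ => hf t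

theorem sum_sq_add_right_le {G : Type*} [AddGroup G] {y : G → ℝ} {s : Finset G}
    (hs : support y ⊆ s) (U : Finset G) (k : G) :
    ∑ t ∈ U, y (t + k) ^ 2 ≤ ∑ t ∈ s, y t ^ 2 :=
  calc ∑ t ∈ U, y (t + k) ^ 2 = ∑ t ∈ U.map (addRightEmbedding k), y t ^ 2 := by
        rw [sum_map]; rfl
    _ ≤ ∑ t ∈ s, y t ^ 2 := sum_le_sum_of_support_subset (fun t => sq_nonneg (y t))
        ((support_pow y two_ne_zero).trans_subset hs) _

theorem sum_sq_sub_one_add_add_one_lt {y : ℤ → ℝ} {s : Finset ℤ} (hs : support y ⊆ s)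
    (hy : y ≠ 0) (T : Finset ℤ) :
    ∑ t ∈ T, (y (t - 1) + y (t + 1)) ^ 2 < 4 * ∑ t ∈ s, y t ^ 2 := by
  obtain ⟨m, hm⟩ := (s.finite_toSet.subset hs).exists_maximal (support_nonempty_iff.2 hy)
  have hym : y m ≠ 0 := hm.prop
  have hym2 : y (m + 2) = 0 := by
    by_contra h
    have := hm.le_of_ge h (by omega)
    omega
  set U := insert (m + 1) T
  have hdiff : y m ^ 2 ≤ ∑ t ∈ U, (y (t - 1) - y (t + 1)) ^ 2 := by
    have := single_le_sum (fun t _ => sq_nonneg (y (t - 1) - y (t + 1)))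
      (mem_insert_self (m + 1) T)
    simpa [add_assoc, hym2] using this
  calc ∑ t ∈ T, (y (t - 1) + y (t + 1)) ^ 2 ≤ ∑ t ∈ U, (y (t - 1) + y (t + 1)) ^ 2 :=
        sum_le_sum_of_subset_of_nonneg (subset_insert _ _) fun t _ _ => sq_nonneg _
    _ = 2 * ∑ t ∈ U, y (t + -1) ^ 2 + 2 * ∑ t ∈ U, y (t + 1) ^ 2
          - ∑ t ∈ U, (y (t - 1) - y (t + 1)) ^ 2 := by
        simp only [mul_sum, ← sum_add_distrib, ← sum_sub_distrib, ← sub_eq_add_neg]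
        exact sum_congr rfl fun t _ => by ring
    _ < 2 * ∑ t ∈ s, y t ^ 2 + 2 * ∑ t ∈ s, y t ^ 2 := by
        linarith [sum_sq_add_right_le hs U (-1), sum_sq_add_right_le hs U 1,
          sq_pos_of_ne_zero hym]
    _ = 4 * ∑ t ∈ s, y t ^ 2 := by ring

theorem sum_ite_eq_extend {ι β M : Type*} [Fintype ι] [DecidableEq β] [AddCommMonoid M]
    {f : ι → β} (hf : Injective f) (g : ι → M) (b : β) :
    ∑ j, (if f j = b then g j else 0) = extend f g 0 b := by
  by_cases hb : ∃ a, f a = b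
  · obtain ⟨a, rfl⟩ := hb
    rw [hf.extend_apply, Fintype.sum_eq_single a fun j hj => if_neg (hf.ne hj), if_pos rfl]
  · rw [extend_apply' g (0 : β → M) b hb, Pi.zero_apply]
    exact sum_eq_zero fun j _ => if_neg fun h => hb ⟨j, h⟩

theorem support_extend_zero_subset {α β M : Type*} [Zero M] (f : α → β) (g : α → M) :
    support (extend f g 0) ⊆ Set.range f := fun b hb => by
  by_contra h
  exact hb (extend_apply' g (0 : β → M) b h)

open Finset in
theorem stmt_10_general (n : ℕ) (σ : Fin n → Bool)
    (x : {j : Fin n // σ j = false} → ℝ) (hx : x ≠ 0) :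
    0 < 4 * ∑ j : {j : Fin n // σ j = false}, x j ^ 2 -
        ∑ i : {i : Fin n // σ i = true},
          (∑ j : {j : Fin n // σ j = false},
            if ((i : Fin n) : ℕ) + 1 = ((j : Fin n) : ℕ) ∨
               ((j : Fin n) : ℕ) + 1 = ((i : Fin n) : ℕ) then x j else 0) ^ 2 := by
  classical
  let e : {j : Fin n // σ j = false} → ℤ := fun j => ((j : Fin n) : ℕ)
  let e' : {i : Fin n // σ i = true} → ℤ := fun i => ((i : Fin n) : ℕ)
  have he : Injective e := fun a b h => Subtype.ext (Fin.ext (by simpa [e] using h))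
  have he' : Injective e' := fun a b h => Subtype.ext (Fin.ext (by simpa [e'] using h))
  let y : ℤ → ℝ := extend e x 0
  have hy_supp : support y ⊆ univ.image e := by
    simpa only [coe_image, coe_univ, Set.image_univ] using support_extend_zero_subset e x
  have hy : y ≠ 0 := fun h => hx (funext fun j => by
    rw [← he.extend_apply x 0 j]; exact congrFun h (e j))
  have hsource : ∀ i : {i : Fin n // σ i = true}, (∑ j : {j : Fin n // σ j = false},
      if ((i : Fin n) : ℕ) + 1 = ((j : Fin n) : ℕ) ∨
         ((j : Fin n) : ℕ) + 1 = ((i : Fin n) : ℕ) then x j else 0) =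
        y (e' i - 1) + y (e' i + 1) := fun i => by
    change _ = extend e x 0 (e' i - 1) + extend e x 0 (e' i + 1)
    rw [← sum_ite_eq_extend he x, ← sum_ite_eq_extend he x, ← sum_add_distrib]
    refine sum_congr rfl fun j _ => ?_
    simp only [e, e']
    split_ifs <;> first | omega | simp
  have hsinks : ∑ t ∈ univ.image e, y t ^ 2 = ∑ j, x j ^ 2 := by
    rw [sum_image he.injOn]
    simp only [y, he.extend_apply]
  have hsources : ∑ t ∈ univ.image e', (y (t - 1) + y (t + 1)) ^ 2 =
      ∑ i, (y (e' i - 1) + y (e' i + 1)) ^ 2 :=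
    sum_image he'.injOn
  simp only [hsource, ← hsinks, ← hsources]
  linarith [sum_sq_sub_one_add_add_one_lt hy_supp hy (univ.image e')]

open Finset in
/-- Let `Δ` be a bipartite orientation of the Dynkin diagram `A_n`: every vertex is a
source (`σ i = true`) or a sink (`σ i = false`), and adjacent vertices have opposite
types, so arrows go from sources to sinks along the edges of the path `1 — 2 — ⋯ — n`.
The quadratic form
`q(x) = 4 ∑_{j sinks} x_j² − ∑_{i sources} (∑_{j sinks adjacent to i} x_j)²`
on real vectors indexed by the sinks is positive definite. -/
theorem stmt_10 (n : ℕ) (σ : Fin n → Bool)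
    (halt : ∀ i j : Fin n, (i : ℕ) + 1 = (j : ℕ) → σ i ≠ σ j)
    (x : {j : Fin n // σ j = false} → ℝ) (hx : x ≠ 0) :
    0 < 4 * ∑ j : {j : Fin n // σ j = false}, x j ^ 2 -
        ∑ i : {i : Fin n // σ i = true},
          (∑ j : {j : Fin n // σ j = false},
            if ((i : Fin n) : ℕ) + 1 = ((j : Fin n) : ℕ) ∨
               ((j : Fin n) : ℕ) + 1 = ((i : Fin n) : ℕ) then x j else 0) ^ 2 :=
  stmt_10_general n σ x hx
end

section
/- Let Q be a finite quiver without multiple arrows and let Q^s be its separated quiver. If for every connected component Δ of Q^s the associated quadratic form q_Δ(x) = 4∑_{j sinks} x_j² − ∑_{i sources}(∑_j a_{ij}x_j)² is positive semidefinite, then the spectral radius of Q is at most 2. If moreover each q_Δ is positive definite, then the spectral radius of Q is strictly less than 2. -/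
open Finset

section SpectralRadius

variable {ι : Type*} [Fintype ι] [DecidableEq ι] {M : Matrix ι ι ℂ}

lemma specRad_le_of_forall_norm_le {c : ℝ} (hc : 0 ≤ c) (h : ∀ μ ∈ spectrum ℂ M, ‖μ‖ ≤ c) :
    specRad M ≤ c :=
  Real.sSup_le (by rintro _ ⟨μ, hμ, rfl⟩; exact h μ hμ) hc

lemma specRad_lt_of_forall_norm_lt {c : ℝ} (hc : 0 < c) (h : ∀ μ ∈ spectrum ℂ M, ‖μ‖ < c) :
    specRad M < c := by
  have himage : {r : ℝ | ∃ μ ∈ spectrum ℂ M, r = ‖μ‖} = norm '' spectrum ℂ M := by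
    ext; simp [eq_comm]
  rw [specRad, himage]
  rcases (spectrum ℂ M).eq_empty_or_nonempty with hempty | hne
  · simpa [hempty] using hc
  · refine (M.finite_spectrum.image _).csSup_lt_iff (hne.image _) |>.mpr ?_
    rintro _ ⟨μ, hμ, rfl⟩
    exact h μ hμ

lemma exists_ne_zero_norm_mul_le_of_mem_spectrum {μ : ℂ} (hμ : μ ∈ spectrum ℂ M) :
    ∃ v : ι → ℂ, v ≠ 0 ∧ ∀ i, ‖μ‖ * ‖v i‖ ≤ ∑ j, ‖M i j‖ * ‖v j‖ := by
  rw [← Matrix.spectrum_toLin', ← Module.End.hasEigenvalue_iff_mem_spectrum] at hμ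
  obtain ⟨v, hv⟩ := hμ.exists_hasEigenvector
  refine ⟨v, hv.2, fun i => ?_⟩
  have hrow : ∑ j, M i j * v j = μ * v i := by
    simpa [Matrix.mulVec, dotProduct] using congrFun hv.apply_eq_smul i
  calc ‖μ‖ * ‖v i‖ = ‖∑ j, M i j * v j‖ := by rw [hrow, norm_mul]
    _ ≤ ∑ j, ‖M i j‖ * ‖v j‖ := (norm_sum_le _ _).trans_eq (by simp_rw [norm_mul])

lemma exists_ne_zero_norm_sq_mul_sum_sq_le_of_mem_spectrum {μ : ℂ} (hμ : μ ∈ spectrum ℂ M) :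
    ∃ x : ι → ℝ, x ≠ 0 ∧ ‖μ‖ ^ 2 * ∑ i, x i ^ 2 ≤ ∑ i, (∑ j, ‖M i j‖ * x j) ^ 2 := by
  obtain ⟨v, hv, hle⟩ := exists_ne_zero_norm_mul_le_of_mem_spectrum hμ
  refine ⟨fun j => ‖v j‖, fun h => hv (funext fun j => norm_eq_zero.mp (congrFun h j)), ?_⟩
  rw [mul_sum]
  gcongr with i
  rw [← mul_pow]
  exact pow_le_pow_left₀ (by positivity) (hle i) 2

end SpectralRadius

lemma sum_sq_pos_of_ne_zero {ι : Type*} [Fintype ι] {x : ι → ℝ} (hx : x ≠ 0) :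
    0 < ∑ i, x i ^ 2 := by
  obtain ⟨j, hj⟩ := Function.ne_iff.mp hx
  exact sum_pos' (fun i _ => sq_nonneg (x i)) ⟨j, mem_univ j, sq_pos_of_ne_zero hj⟩

open Finset in
theorem stmt_12_general {n : ℕ} (a : Matrix (Fin n) (Fin n) ℕ)
    (hpsd : ∀ x : Fin n → ℝ,
      0 ≤ 4 * ∑ j, x j ^ 2 - ∑ i, (∑ j, (a i j : ℝ) * x j) ^ 2) :
    specRad (a.map (Nat.cast : ℕ → ℂ)) ≤ 2 ∧
      ((∀ x : Fin n → ℝ, x ≠ 0 →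
          0 < 4 * ∑ j, x j ^ 2 - ∑ i, (∑ j, (a i j : ℝ) * x j) ^ 2) →
        specRad (a.map (Nat.cast : ℕ → ℂ)) < 2) := by
  have key : ∀ μ ∈ spectrum ℂ (a.map (Nat.cast : ℕ → ℂ)), ∃ x : Fin n → ℝ, x ≠ 0 ∧
      ‖μ‖ ^ 2 * ∑ j, x j ^ 2 ≤ ∑ i, (∑ j, (a i j : ℝ) * x j) ^ 2 := fun μ hμ => by
    simpa using exists_ne_zero_norm_sq_mul_sum_sq_le_of_mem_spectrum hμ
  refine ⟨specRad_le_of_forall_norm_le zero_le_two fun μ hμ => ?_,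
    fun hpd => specRad_lt_of_forall_norm_lt two_pos fun μ hμ => ?_⟩
  · obtain ⟨x, hx, hμx⟩ := key μ hμ
    have hsq : ‖μ‖ ^ 2 ≤ 2 ^ 2 :=
      le_of_mul_le_mul_right (by linarith [hpsd x]) (sum_sq_pos_of_ne_zero hx)
    exact (pow_le_pow_iff_left₀ (norm_nonneg μ) zero_le_two two_ne_zero).mp hsq
  · obtain ⟨x, hx, hμx⟩ := key μ hμ
    have hsq : ‖μ‖ ^ 2 < 2 ^ 2 :=
      lt_of_mul_lt_mul_right (by linarith [hpd x hx]) (sum_sq_pos_of_ne_zero hx).le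
    exact (pow_lt_pow_iff_left₀ (norm_nonneg μ) zero_le_two two_ne_zero).mp hsq

open Finset in
/-- Let `Q` be a finite quiver without multiple arrows, with arrow-count matrix
`a` (so `a i j ≤ 1`).  The separated quiver `Q^s` is bipartite with sources `i⁺` and
sinks `j⁻`, and one arrow `i⁺ → j⁻` for each arrow `i → j` of `Q`; its associated
quadratic form on vectors indexed by the sinks (i.e. by `Q_0`) is
`q(x) = 4 ∑_j x_j² − ∑_i (∑_j a_{ij} x_j)²`, the orthogonal sum of the forms `q_Δ` of
the connected components `Δ` of `Q^s`.  If `q` is positive semidefinite (equivalently,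
each `q_Δ` is), then the spectral radius of `Q` is at most `2`; if moreover `q` is
positive definite (equivalently, each `q_Δ` is), then the spectral radius of `Q` is
strictly less than `2`. -/
theorem stmt_12 {n : ℕ} (a : Matrix (Fin n) (Fin n) ℕ)
    (hsimple : ∀ i j, a i j ≤ 1)
    (hpsd : ∀ x : Fin n → ℝ,
      0 ≤ 4 * ∑ j, x j ^ 2 - ∑ i, (∑ j, (a i j : ℝ) * x j) ^ 2) :
    specRad (a.map (Nat.cast : ℕ → ℂ)) ≤ 2 ∧
      ((∀ x : Fin n → ℝ, x ≠ 0 →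
          0 < 4 * ∑ j, x j ^ 2 - ∑ i, (∑ j, (a i j : ℝ) * x j) ^ 2) →
        specRad (a.map (Nat.cast : ℕ → ℂ)) < 2) :=
  stmt_12_general a hpsd
end

section
/- Let A be a finite-dimensional algebra, r a central element in the Jacobson radical of A, and B = A/⟨r⟩. If S is a brick over A satisfying Sr = 0 and there is a primitive idempotent e_i with r·e_i = 0 and S·e_i ≠ 0, then every self-extension of S in mod A already lies in mod B; that is, Ext¹_A(S,S) = Ext¹_B(S,S). -/
/-- Let `A` be a finite-dimensional algebra over an algebraically closed field `k`,
`r` a central element of the Jacobson radical of `A`, and `B = A/⟨r⟩` (whose modules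
are identified with the `A`-modules annihilated by `r`).  Suppose `S` is a brick over
`A` (every endomorphism is zero or invertible, and `S ≠ 0`) with `S·r = 0`, and that
there is a primitive idempotent `e` with `r·e = 0` and `S·e ≠ 0`.  Then every
self-extension of `S` in `mod A` already lies in `mod B`: for every short exact
sequence `0 → S → M → S → 0` of `A`-modules, the middle term `M` is annihilated by
`r`; hence `Ext¹_A(S,S) = Ext¹_B(S,S)`. -/
theorem stmt_18 (k : Type*) [Field k] [IsAlgClosed k]
    (A : Type*) [Ring A] [Algebra k A] [FiniteDimensional k A]
    (r : A) (hrc : r ∈ Set.center A) (hrJ : r ∈ (⊥ : Ideal A).jacobson)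
    (e : A) (he : IsIdempotentElem e) (hene : e ≠ 0)
    (hprim : ∀ f g : A, IsIdempotentElem f → IsIdempotentElem g →
      f * g = 0 → g * f = 0 → e = f + g → f = 0 ∨ g = 0)
    (hre : r * e = 0)
    (S : Type*) [AddCommGroup S] [Module A S] [Module k S] [IsScalarTower k A S]
    [FiniteDimensional k S] [Nontrivial S]
    (hbrick : ∀ φ : S →ₗ[A] S, φ = 0 ∨ Function.Bijective φ)
    (hSr : ∀ s : S, r • s = 0)
    (hSe : ∃ s : S, e • s ≠ 0)
    (M : Type*) [AddCommGroup M] [Module A M]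
    (f : S →ₗ[A] M) (g : M →ₗ[A] S)
    (hf : Function.Injective f) (hg : Function.Surjective g)
    (hexact : LinearMap.range f = LinearMap.ker g) :
    ∀ m : M, r • m = 0 := by

  have hcomm : ∀ a : A, r * a = a * r := fun a => ((Set.mem_center_iff.mp hrc).comm a)
  -- section of g
  choose sec hsec using hg
  -- for each s, r • sec s lies in range f
  have hker : ∀ s : S, r • sec s ∈ LinearMap.range f := by
    intro s
    rw [hexact, LinearMap.mem_ker, map_smul, hsec, hSr]
  choose t ht using fun s => (hker s)
  -- key: f (t (g m)) = r • m for all m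
  have key : ∀ m : M, f (t (g m)) = r • m := by
    intro m
    have hmem : m - sec (g m) ∈ LinearMap.ker g := by
      rw [LinearMap.mem_ker, map_sub, hsec, sub_self]
    rw [← hexact] at hmem
    obtain ⟨u, hu⟩ := hmem
    have : m = sec (g m) + f u := by rw [hu]; abel
    rw [ht]
    conv_rhs => rw [this]
    rw [smul_add, ← map_smul, hSr, map_zero, add_zero]
  -- t is A-linear
  have tadd : ∀ s s' : S, t (s + s') = t s + t s' := by
    intro s s'
    apply hf
    have h1 : g (sec s + sec s') = s + s' := by rw [map_add, hsec, hsec]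
    have := key (sec s + sec s')
    rw [h1] at this
    rw [this, map_add, ht, ht, smul_add]
  have tsmul : ∀ (a : A) (s : S), t (a • s) = a • t s := by
    intro a s
    apply hf
    have h1 : g (a • sec s) = a • s := by rw [map_smul, hsec]
    have := key (a • sec s)
    rw [h1] at this
    rw [this, map_smul, ht, smul_smul, smul_smul, hcomm]
  let ψ : S →ₗ[A] S := { toFun := t, map_add' := tadd, map_smul' := tsmul }
  have key' : ∀ m : M, f (ψ (g m)) = r • m := key
  rcases hbrick ψ with h0 | hbij
  · intro m
    rw [← key' m, h0]
    simp
  · exfalso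
    obtain ⟨s, hs⟩ := hSe
    apply hs
    have h1 : g (e • sec s) = e • s := by rw [map_smul, hsec]
    have h2 : f (ψ (e • s)) = 0 := by
      rw [← h1, key', smul_smul, hre, zero_smul]
    have h3 : ψ (e • s) = 0 := hf (by rw [h2, map_zero])
    have := hbij.injective (a₁ := e • s) (a₂ := 0) (by rw [h3, map_zero])
    exact this
end
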